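/- arXiv:2403.00314 — 3 statements merged into one kernel-verified Lean document; each statement's English description precedes it below -/
import Mathlib

section
/- Let {z^k} be a sequence with z^{k+1} optimal for the subproblem min L(x) + (β/2)‖z - z^k‖² subject to ḡ^k(z) ≤ 0 and hⱼ(z) ≤ 0 on X, where ḡ^k(z) ≥ g(z) for all z and ḡ^k(z^k) = g(z^k), and suppose z^0 is feasible for the k=0 subproblem. Then z^k is feasible for the k-th subproblem for every k ≥ 0, and L(x^{k+1}) - L(x^k) ≤ -(β/2)‖z^{k+1} - z^k‖². -/
open scoped BigOperators

/-- Feasibility propagation and sufficient decrease for the majorization–minimization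
iterates: if each `z^{k+1}` is optimal for the `k`-th majorized subproblem, the majorized
constraint `ḡ^k` majorizes `g` and touches it at `z^k`, and `z^0` is feasible for the
`k = 0` subproblem, then every `z^k` is feasible for the `k`-th subproblem and
`L(x^{k+1}) - L(x^k) ≤ -(β/2)‖z^{k+1} - z^k‖²`. -/
theorem mm_feasibility_and_sufficient_decrease
    {A W : Type*} [NormedAddCommGroup A] [NormedSpace ℝ A]
    [NormedAddCommGroup W] [NormedSpace ℝ W] (τ : ℕ)
    (L : A → ℝ) (β : ℝ) (hβ : 0 < β)
    (g : A × W → ℝ) (gbar : ℕ → A × W → ℝ) (h : Fin τ → A × W → ℝ) (X : Set (A × W))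
    (z : ℕ → A × W)
    (hmaj : ∀ k (z' : A × W), g z' ≤ gbar k z')
    (htouch : ∀ k, gbar k (z k) = g (z k))
    (hopt : ∀ k,
      (z (k + 1) ∈ X ∧ gbar k (z (k + 1)) ≤ 0 ∧ ∀ j, h j (z (k + 1)) ≤ 0) ∧
      ∀ z' ∈ X, gbar k z' ≤ 0 → (∀ j, h j z' ≤ 0) →
        L (z (k + 1)).1 + β / 2 * ‖z (k + 1) - z k‖ ^ 2 ≤ L z'.1 + β / 2 * ‖z' - z k‖ ^ 2)
    (hfeas0 : z 0 ∈ X ∧ gbar 0 (z 0) ≤ 0 ∧ ∀ j, h j (z 0) ≤ 0) :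
    (∀ k, z k ∈ X ∧ gbar k (z k) ≤ 0 ∧ ∀ j, h j (z k) ≤ 0) ∧
    (∀ k, L (z (k + 1)).1 - L (z k).1 ≤ -(β / 2) * ‖z (k + 1) - z k‖ ^ 2) := by
  have feas : ∀ k, z k ∈ X ∧ gbar k (z k) ≤ 0 ∧ ∀ j, h j (z k) ≤ 0 := by
    intro k
    induction k with
    | zero => exact hfeas0
    | succ n ih =>
      obtain ⟨⟨hX, hg, hh⟩, -⟩ := hopt n
      refine ⟨hX, ?_, hh⟩
      rw [htouch (n + 1)]
      exact le_trans (hmaj n _) hg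
  refine ⟨feas, fun k => ?_⟩
  obtain ⟨hX, hg, hh⟩ := feas k
  have := (hopt k).2 (z k) hX hg hh
  simp only [sub_self, norm_zero] at this
  nlinarith [this]
end

section
/- For λ > 0 and the hinge-loss-type lower-level problem min_{-w̄ ≤ w ≤ w̄} Σⱼ max(1 - bⱼ(wᵀaⱼ - c), 0) + (λ/2)‖w‖₂², strong Lagrangian duality holds: the optimal value equals max over dual variables (ρ, α₁ ≥ 0, α₂ ≥ 0) of -l_g*(-ρ, 0) - ‖ρ‖₂²/(2λ), where l_g(w,c) = Σⱼ max(1 - bⱼ(wᵀaⱼ - c), 0) + α₁ᵀ(w - w̄) + α₂ᵀ(-w - w̄) and l_g* is its conjugate in (w,c). -/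
/-!
The primal minimum is attained at some `x₀ = (w₀, c₀)`: the box is compact in `w`, and clamping
`c` to `[-M, M]`, with `M` exceeding every `|w ⬝ aⱼ| + 1`, never increases the hinge loss.
As the hinge loss is convex, `x₀` also minimises the hinge loss plus the linearisation
`λ w₀ ⬝ w` of the ridge term. That problem is convex and `w = 0` is strictly feasible for the box,
so Slater's theorem (separating the set of attainable constraint/objective values from an open
orthant) yields multipliers `α₁, α₂ ≥ 0`; together with `ρ = λ w₀` they attain the primal value.
Weak duality is Young's inequality `ρ ⬝ w ≤ λ‖w‖²/2 + ‖ρ‖²/(2λ)`.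
-/

open Finset Set Filter Topology

theorem nonneg_of_forall_le_add_mul {σ c d : ℝ} (h : ∀ R, 0 ≤ R → σ ≤ c + R * d) : 0 ≤ d := by
  by_contra! hd
  have h₀ := h 0 le_rfl
  have h₁ := h ((c - σ + 1) / -d) (div_nonneg (by linarith) (by linarith))
  rw [div_neg, neg_mul, div_mul_cancel₀ _ hd.ne] at h₁
  linarith

theorem ContinuousLinearMap.apply_eq_sum_mul_add_mul {ι : Type*} [Fintype ι] [DecidableEq ι]
    (φ : ((ι → ℝ) × ℝ) →L[ℝ] ℝ) (z : (ι → ℝ) × ℝ) :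
    φ z = ∑ k, z.1 k * φ (Pi.single k 1, 0) + z.2 * φ (0, 1) := by
  have hz : z = ∑ k, z.1 k • ((Pi.single k 1 : ι → ℝ), (0 : ℝ)) + z.2 • ((0 : ι → ℝ), (1 : ℝ)) := by
    ext k <;> simp [Prod.fst_sum, Prod.snd_sum, Finset.sum_apply, Pi.single_apply]
  conv_lhs => rw [hz]
  rw [map_add, map_sum]
  simp only [map_smul, smul_eq_mul]

section LagrangeDuality

variable {E ι : Type*} [AddCommGroup E] [Module ℝ E]

theorem convexOn_sum {s : Set E} {t : Finset ι} {f : ι → E → ℝ}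
    (hs : Convex ℝ s) (hf : ∀ j ∈ t, ConvexOn ℝ s (f j)) :
    ConvexOn ℝ s (fun x => ∑ j ∈ t, f j x) := by
  simpa only [← Finset.sum_apply] using
    Finset.sum_induction f (ConvexOn ℝ s) (fun _ _ => ConvexOn.add) (convexOn_const 0 hs) hf

/-- Boyd–Vandenberghe's set `𝒜` (Convex Optimization, §5.3.2). -/
def lagrangeValueSet (f : E → ℝ) (g : ι → E → ℝ) : Set ((ι → ℝ) × ℝ) :=
  {z | ∃ x, (∀ k, g k x ≤ z.1 k) ∧ f x ≤ z.2}

theorem convex_lagrangeValueSet {f : E → ℝ} {g : ι → E → ℝ} (hf : ConvexOn ℝ univ f)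
    (hg : ∀ k, ConvexOn ℝ univ (g k)) : Convex ℝ (lagrangeValueSet f g) := by
  rintro z ⟨x, hgx, hfx⟩ z' ⟨x', hgx', hfx'⟩ s t hs ht hst
  refine ⟨s • x + t • x', fun k => ((hg k).2 trivial trivial hs ht hst).trans ?_,
    (hf.2 trivial trivial hs ht hst).trans ?_⟩
  · simp only [Prod.fst_add, Prod.smul_fst, Pi.add_apply, Pi.smul_apply, smul_eq_mul]
    gcongr <;> simp [hgx, hgx']
  · simp only [Prod.snd_add, Prod.smul_snd, smul_eq_mul]
    gcongr

theorem exists_lagrange_multipliers_of_slater [Fintype ι] {f : E → ℝ}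
    {g : ι → E → ℝ} (hf : ConvexOn ℝ univ f) (hg : ∀ k, ConvexOn ℝ univ (g k)) {x₀ : E}
    (hx₀ : ∀ k, g k x₀ < 0) {P : ℝ} (hP : ∀ x, (∀ k, g k x ≤ 0) → P ≤ f x) :
    ∃ μ : ι → ℝ, (∀ k, 0 ≤ μ k) ∧ ∀ x, P ≤ f x + ∑ k, μ k * g k x := by
  classical
  set A := lagrangeValueSet f g
  set B : Set ((ι → ℝ) × ℝ) := (univ.pi fun _ => Iio 0) ×ˢ Iio P
  have hBA : Disjoint B A := by
    rw [Set.disjoint_left]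
    rintro z ⟨hu, ht⟩ ⟨x, hgx, hfx⟩
    exact (hP x fun k => (hgx k).trans (hu k (mem_univ k)).le).not_gt (hfx.trans_lt ht)
  obtain ⟨φ, σ, hφB, hφA⟩ := geometric_hahn_banach_open
    ((convex_pi fun _ _ => convex_Iio 0).prod (convex_Iio P))
    ((isOpen_set_pi finite_univ fun _ _ => isOpen_Iio).prod isOpen_Iio)
    (convex_lagrangeValueSet hf hg) hBA
  set ν : ι → ℝ := fun k => φ (Pi.single k 1, 0)
  set γ : ℝ := φ (0, 1)
  have hφ : ∀ z, φ z = ∑ k, z.1 k * ν k + z.2 * γ := φ.apply_eq_sum_mul_add_mul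
  have hσA : ∀ x, σ ≤ ∑ k, g k x * ν k + f x * γ := fun x =>
    (hφA (fun k => g k x, f x) ⟨x, fun _ => le_rfl, le_rfl⟩).trans_eq (hφ _)
  have hPσ : P * γ ≤ σ := by
    have hcl : ((0 : ι → ℝ), P) ∈ closure B := by
      rw [closure_prod_eq, closure_pi_set]
      simp only [closure_Iio]
      exact ⟨fun _ _ => self_mem_Iic, self_mem_Iic⟩
    have h : φ (0, P) ≤ σ := closure_minimal (t := {z | φ z ≤ σ}) (fun z hz => (hφB z hz).le)
      (isClosed_le φ.continuous continuous_const) hcl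
    simpa [hφ] using h
  -- Slater's point with a value below `P` lies in `B`, which forces `γ > 0`.
  have hγ : 0 < γ := by
    have h₁ := hφB (fun k => g k x₀, P - 1) ⟨fun k _ => hx₀ k, by simp⟩
    have h₂ := hσA x₀
    have h₃ := hP x₀ fun k => (hx₀ k).le
    rw [hφ] at h₁
    nlinarith
  -- `A` is stable under raising one constraint value.
  have hν : ∀ k, 0 ≤ ν k := fun k => nonneg_of_forall_le_add_mul fun R hR => by
    have hmem : (fun l => g l x₀, f x₀) + R • ((Pi.single k 1 : ι → ℝ), (0 : ℝ)) ∈ A :=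
      ⟨x₀, fun l => le_add_of_nonneg_right <| mul_nonneg hR <|
        (Pi.single_nonneg.2 zero_le_one : (0 : ι → ℝ) ≤ Pi.single k 1) l, by simp⟩
    have h := hφA _ hmem
    rwa [map_add, map_smul, smul_eq_mul, hφ (fun l => g l x₀, f x₀)] at h
  refine ⟨fun k => ν k / γ, fun k => div_nonneg (hν k) hγ.le, fun x => ?_⟩
  have hsum : ∑ k, ν k / γ * g k x = (∑ k, g k x * ν k) / γ := by
    rw [sum_div]; exact sum_congr rfl fun k _ => by ring
  rw [hsum, ← sub_le_iff_le_add', le_div_iff₀ hγ]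
  linarith [hPσ.trans (hσA x)]

theorem ConvexOn.le_add_polar_of_isMinOn_add {s : Set E} {h : E → ℝ} (hh : ConvexOn ℝ s h)
    (Q : QuadraticForm ℝ E) {x₀ : E} (hx₀ : x₀ ∈ s) (hmin : IsMinOn (fun y => h y + Q y) s x₀)
    {x : E} (hx : x ∈ s) : h x₀ ≤ h x + QuadraticMap.polar Q x₀ (x - x₀) := by
  set d := x - x₀
  set D := h x - h x₀ + QuadraticMap.polar Q x₀ d
  have key : ∀ t ∈ Ioc (0 : ℝ) 1, 0 ≤ D + t * Q d := by
    rintro t ⟨ht₀, ht₁⟩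
    have hconv : h (x₀ + t • d) ≤ (1 - t) * h x₀ + t * h x := by
      have hpt : x₀ + t • d = (1 - t) • x₀ + t • x := by
        simp only [d, smul_sub, sub_smul, one_smul]; abel
      rw [hpt]
      exact hh.2 hx₀ hx (by linarith) ht₀.le (by ring)
    have hQ : Q (x₀ + t • d) = Q x₀ + t * QuadraticMap.polar Q x₀ d + t ^ 2 * Q d := by
      have h₁ : Q (x₀ + t • d) - Q x₀ - Q (t • d) = t * QuadraticMap.polar Q x₀ d :=
        QuadraticMap.polar_smul_right Q t x₀ d
      rw [QuadraticMap.map_smul, smul_eq_mul] at h₁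
      linear_combination h₁
    have hle : h x₀ + Q x₀ ≤ h (x₀ + t • d) + Q (x₀ + t • d) :=
      hmin (hh.1.add_smul_sub_mem hx₀ hx ⟨ht₀.le, ht₁⟩)
    have : 0 ≤ t * (D + t * Q d) := by simp only [D]; nlinarith
    exact (mul_nonneg_iff_of_pos_left ht₀).1 this
  have hlim : Tendsto (fun t => D + t * Q d) (𝓝[>] 0) (𝓝 D) := by
    have : Continuous fun t : ℝ => D + t * Q d := by fun_prop
    simpa using (this.tendsto 0).mono_left nhdsWithin_le_nhds
  have := ge_of_tendsto hlim (eventually_of_mem (Ioc_mem_nhdsGT one_pos) key)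
  simp only [D] at this
  linarith

end LagrangeDuality

theorem EReal.coe_le_neg_iSup₂_sub {α β : Type*} {f : α → β → ℝ} {q r : ℝ}
    (h : ∀ x y, f x y ≤ -r - q) : (r : EReal) ≤ -(⨆ x, ⨆ y, (f x y : EReal)) - q := by
  have hsup : (⨆ x, ⨆ y, (f x y : EReal)) ≤ ((-r - q : ℝ) : EReal) :=
    iSup₂_le fun x y => EReal.coe_le_coe_iff.2 (h x y)
  calc (r : EReal) = -((-r - q : ℝ) : EReal) - q := by
        rw [← EReal.coe_neg, ← EReal.coe_sub]; norm_num
    _ ≤ -(⨆ x, ⨆ y, (f x y : EReal)) - q := EReal.sub_le_sub (EReal.neg_le_neg_iff.2 hsup) le_rfl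

theorem EReal.neg_iSup₂_sub_le {α β : Type*} (f : α → β → ℝ) (q : ℝ) (x : α) (y : β) :
    -(⨆ x, ⨆ y, (f x y : EReal)) - q ≤ ((-f x y - q : ℝ) : EReal) := by
  rw [EReal.coe_sub, EReal.coe_neg]
  exact EReal.sub_le_sub (EReal.neg_le_neg_iff.2 (le_iSup₂_of_le x y le_rfl)) le_rfl

namespace SvmDuality

variable {p J : ℕ}

def hingeLoss (a : Fin J → Fin p → ℝ) (b : Fin J → ℝ) (x : (Fin p → ℝ) × ℝ) : ℝ :=
  ∑ j, max (1 - b j * ((∑ i, x.1 i * a j i) - x.2)) 0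

def box (wbar : Fin p → ℝ) : Set ((Fin p → ℝ) × ℝ) :=
  univ.pi (fun i => Icc (-wbar i) (wbar i)) ×ˢ univ

def boxConstraint (wbar : Fin p → ℝ) : Fin p ⊕ Fin p → (Fin p → ℝ) × ℝ → ℝ
  | .inl i, x => x.1 i - wbar i
  | .inr i, x => -x.1 i - wbar i

def lagrangian (a : Fin J → Fin p → ℝ) (b : Fin J → ℝ) (wbar α₁ α₂ : Fin p → ℝ)
    (x : (Fin p → ℝ) × ℝ) : ℝ :=
  hingeLoss a b x + ∑ i, α₁ i * (x.1 i - wbar i) + ∑ i, α₂ i * (-x.1 i - wbar i)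

noncomputable def ridgePenalty (lam : ℝ) : QuadraticForm ℝ ((Fin p → ℝ) × ℝ) :=
  (QuadraticMap.weightedSumSquares ℝ fun _ : Fin p => lam / 2).comp
    (LinearMap.fst ℝ (Fin p → ℝ) ℝ)

theorem ridgePenalty_apply (lam : ℝ) (x : (Fin p → ℝ) × ℝ) :
    ridgePenalty lam x = lam / 2 * ∑ i, x.1 i ^ 2 := by
  simp [ridgePenalty, mul_sum, sq]

theorem polar_ridgePenalty (lam : ℝ) (x y : (Fin p → ℝ) × ℝ) :
    QuadraticMap.polar (ridgePenalty lam) x y = lam * ∑ i, x.1 i * y.1 i := by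
  simp only [QuadraticMap.polar, ridgePenalty_apply, Prod.fst_add, Pi.add_apply]
  rw [← mul_sub, ← mul_sub, ← sum_sub_distrib, ← sum_sub_distrib, mul_sum, mul_sum]
  exact sum_congr rfl fun i _ => by ring

theorem convex_box (wbar : Fin p → ℝ) : Convex ℝ (box wbar) :=
  (convex_pi fun _ _ => convex_Icc _ _).prod convex_univ

theorem forall_boxConstraint_nonpos_iff {wbar : Fin p → ℝ} {x : (Fin p → ℝ) × ℝ} :
    (∀ k, boxConstraint wbar k x ≤ 0) ↔ x ∈ box wbar := by
  constructor
  · intro h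
    refine ⟨fun i _ => ⟨?_, ?_⟩, mem_univ _⟩
    · have : -x.1 i - wbar i ≤ 0 := h (.inr i)
      linarith
    · exact sub_nonpos.1 (h (.inl i))
  · rintro ⟨hx, -⟩ (i | i)
    · exact sub_nonpos.2 (hx i trivial).2
    · show -x.1 i - wbar i ≤ 0
      linarith [(hx i trivial).1]

theorem convexOn_boxConstraint (wbar : Fin p → ℝ) (k : Fin p ⊕ Fin p) :
    ConvexOn ℝ univ (boxConstraint wbar k) := by
  rcases k with i | i
  all_goals
    let ℓ : ((Fin p → ℝ) × ℝ) →ₗ[ℝ] ℝ :=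
      LinearMap.proj (R := ℝ) (φ := fun _ : Fin p => ℝ) i ∘ₗ LinearMap.fst ℝ _ ℝ
  · refine ((ℓ.convexOn convex_univ).add_const (-wbar i)).congr fun x _ => ?_
    simp [ℓ, boxConstraint, sub_eq_add_neg]
  · refine (((-ℓ).convexOn convex_univ).add_const (-wbar i)).congr fun x _ => ?_
    simp [ℓ, boxConstraint, sub_eq_add_neg]

theorem sum_mul_boxConstraint (wbar : Fin p → ℝ) (μ : Fin p ⊕ Fin p → ℝ) (x : (Fin p → ℝ) × ℝ) :
    ∑ k, μ k * boxConstraint wbar k x =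
      ∑ i, μ (.inl i) * (x.1 i - wbar i) + ∑ i, μ (.inr i) * (-x.1 i - wbar i) :=
  Fintype.sum_sum_type _

variable (a : Fin J → Fin p → ℝ) (b : Fin J → ℝ)

theorem convexOn_hingeLoss : ConvexOn ℝ univ (hingeLoss a b) := by
  unfold hingeLoss
  refine convexOn_sum convex_univ fun j _ => ?_
  let ℓ : ((Fin p → ℝ) × ℝ) →ₗ[ℝ] ℝ := b j • (LinearMap.snd ℝ _ ℝ -
    ∑ i, a j i • (LinearMap.proj (R := ℝ) (φ := fun _ : Fin p => ℝ) i ∘ₗ LinearMap.fst ℝ _ ℝ))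
  refine ((((ℓ.convexOn convex_univ).add_const 1).sup (convexOn_const 0 convex_univ))).congr
    fun x _ => ?_
  simp only [ℓ, LinearMap.coe_smul, Pi.sup_apply, Pi.add_apply, Pi.smul_apply, LinearMap.sub_apply,
    LinearMap.snd_apply, LinearMap.sum_apply, LinearMap.smul_apply, LinearMap.coe_comp,
    LinearMap.coe_proj, LinearMap.coe_fst, Function.comp_apply, Function.eval, smul_eq_mul,
    mul_comm]
  ring_nf

theorem continuous_hingeLoss : Continuous (hingeLoss a b) := by
  unfold hingeLoss; fun_prop

theorem max_one_sub_mul_sub_clamp_le {b S M c : ℝ} (hb : b = 1 ∨ b = -1) (hS : |S| + 1 ≤ M) :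
    max (1 - b * (S - max (-M) (min M c))) 0 ≤ max (1 - b * (S - c)) 0 := by
  obtain ⟨hS₁, hS₂⟩ := abs_le.1 (show |S| ≤ M - 1 by linarith)
  have hM : 0 ≤ M - 1 := (abs_nonneg S).trans (by linarith)
  rcases le_total c (-M) with hc | hc
  · rw [min_eq_right (by linarith), max_eq_left hc]
    rcases hb with rfl | rfl
    · exact max_le (le_max_of_le_right (by linarith)) (le_max_right _ _)
    · exact max_le_max (by linarith) le_rfl
  rcases le_total c M with hc' | hc'
  · rw [min_eq_right hc', max_eq_right hc]
  · rw [min_eq_left hc', max_eq_right (show -M ≤ M by linarith)]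
    rcases hb with rfl | rfl
    · exact max_le_max (by linarith) le_rfl
    · exact max_le (le_max_of_le_right (by linarith)) (le_max_right _ _)

variable {a b}

theorem exists_isMinOn_primal (hb : ∀ j, b j = 1 ∨ b j = -1) {wbar : Fin p → ℝ}
    (hwbar : ∀ i, 0 ≤ wbar i) (lam : ℝ) :
    ∃ x₀ ∈ box wbar,
      IsMinOn (fun x => hingeLoss a b x + lam / 2 * ∑ i, x.1 i ^ 2) (box wbar) x₀ := by
  set M := 1 + ∑ j, ∑ i, wbar i * |a j i|
  have hM : ∀ x ∈ box wbar, ∀ j, |∑ i, x.1 i * a j i| + 1 ≤ M := by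
    intro x hx j
    have hbound : |∑ i, x.1 i * a j i| ≤ ∑ j, ∑ i, wbar i * |a j i| :=
      calc |∑ i, x.1 i * a j i| ≤ ∑ i, |x.1 i| * |a j i| := by
            simpa only [abs_mul] using abs_sum_le_sum_abs (fun i => x.1 i * a j i) univ
        _ ≤ ∑ i, wbar i * |a j i| := by
            gcongr with i; exact abs_le.2 (hx.1 i trivial)
        _ ≤ ∑ j, ∑ i, wbar i * |a j i| :=
            single_le_sum (f := fun j => ∑ i, wbar i * |a j i|)
              (fun j _ => sum_nonneg fun i _ => mul_nonneg (hwbar i) (abs_nonneg _)) (mem_univ j)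
    linarith
  have hM₁ : 1 ≤ M := le_add_of_nonneg_right
    (sum_nonneg fun j _ => sum_nonneg fun i _ => mul_nonneg (hwbar i) (abs_nonneg _))
  set K := univ.pi (fun i => Icc (-wbar i) (wbar i)) ×ˢ Icc (-M) M
  have hK : IsCompact K := (isCompact_univ_pi fun _ => isCompact_Icc).prod isCompact_Icc
  have hK₀ : (0 : (Fin p → ℝ) × ℝ) ∈ K :=
    ⟨fun i _ => ⟨by simpa using hwbar i, hwbar i⟩, show -M ≤ 0 ∧ 0 ≤ M by constructor <;> linarith⟩
  obtain ⟨x₀, hx₀, hmin⟩ := hK.exists_isMinOn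
    (f := fun x => hingeLoss a b x + lam / 2 * ∑ i, x.1 i ^ 2) ⟨0, hK₀⟩
    ((continuous_hingeLoss a b).add (by fun_prop)).continuousOn
  refine ⟨x₀, ⟨hx₀.1, mem_univ _⟩, fun x hx => ?_⟩
  have hclamp : (x.1, max (-M) (min M x.2)) ∈ K :=
    ⟨hx.1, le_max_left _ _, max_le (by linarith) (min_le_left _ _)⟩
  refine (isMinOn_iff.1 hmin _ hclamp).trans (add_le_add (sum_le_sum fun j _ => ?_) le_rfl)
  exact max_one_sub_mul_sub_clamp_le (hb j) (hM x hx j)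

theorem exists_box_multipliers {wbar : Fin p → ℝ} (hwbar : ∀ i, 0 < wbar i) {lam : ℝ}
    {x₀ : (Fin p → ℝ) × ℝ} (hx₀ : x₀ ∈ box wbar)
    (hmin : IsMinOn (fun x => hingeLoss a b x + lam / 2 * ∑ i, x.1 i ^ 2) (box wbar) x₀) :
    ∃ μ : Fin p ⊕ Fin p → ℝ, (∀ k, 0 ≤ μ k) ∧ ∀ x,
      hingeLoss a b x₀ + lam * ∑ i, x₀.1 i * x₀.1 i ≤
        hingeLoss a b x + lam * ∑ i, x₀.1 i * x.1 i + ∑ k, μ k * boxConstraint wbar k x := by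
  have hmin' : IsMinOn (fun x => hingeLoss a b x + ridgePenalty lam x) (box wbar) x₀ := by
    simpa only [ridgePenalty_apply] using hmin
  have hG : ConvexOn ℝ univ fun x => hingeLoss a b x + QuadraticMap.polar (ridgePenalty lam) x₀ x :=
    (convexOn_hingeLoss a b).add
      ((QuadraticMap.polarBilin (ridgePenalty lam) x₀).convexOn convex_univ)
  obtain ⟨μ, hμ, hle⟩ := exists_lagrange_multipliers_of_slater hG (convexOn_boxConstraint wbar)
    (x₀ := 0) (P := hingeLoss a b x₀ + QuadraticMap.polar (ridgePenalty lam) x₀ x₀)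
    (by rintro (i | i) <;> simp [boxConstraint, hwbar i]) fun x hx => by
      have := ((convexOn_hingeLoss a b).subset (subset_univ _) (convex_box wbar))
        |>.le_add_polar_of_isMinOn_add _ hx₀ hmin' (forall_boxConstraint_nonpos_iff.1 hx)
      rw [QuadraticMap.polar_sub_right] at this
      linarith
  exact ⟨μ, hμ, fun x => by simpa only [polar_ridgePenalty] using hle x⟩

theorem exists_dual_certificate {wbar : Fin p → ℝ} (hwbar : ∀ i, 0 < wbar i) {lam : ℝ}
    (hlam : lam ≠ 0) {x₀ : (Fin p → ℝ) × ℝ} (hx₀ : x₀ ∈ box wbar)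
    (hmin : IsMinOn (fun x => hingeLoss a b x + lam / 2 * ∑ i, x.1 i ^ 2) (box wbar) x₀) :
    ∃ α₁ α₂ : Fin p → ℝ, (∀ i, 0 ≤ α₁ i) ∧ (∀ i, 0 ≤ α₂ i) ∧ ∀ x,
      (∑ i, -(lam * x₀.1 i) * x.1 i) + 0 * x.2 - lagrangian a b wbar α₁ α₂ x ≤
        -(hingeLoss a b x₀ + lam / 2 * ∑ i, x₀.1 i ^ 2) -
          (∑ i, (lam * x₀.1 i) ^ 2) / (2 * lam) := by
  obtain ⟨μ, hμ, hle⟩ := exists_box_multipliers hwbar hx₀ hmin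
  refine ⟨fun i => μ (.inl i), fun i => μ (.inr i), fun i => hμ _, fun i => hμ _, fun x => ?_⟩
  have h := hle x
  rw [sum_mul_boxConstraint] at h
  have hρ : (∑ i, (lam * x₀.1 i) ^ 2) / (2 * lam) = lam / 2 * ∑ i, x₀.1 i ^ 2 := by
    rw [div_eq_iff (mul_ne_zero two_ne_zero hlam), mul_sum, sum_mul]
    exact sum_congr rfl fun i _ => by ring
  have hlin : ∑ i, -(lam * x₀.1 i) * x.1 i = -(lam * ∑ i, x₀.1 i * x.1 i) := by
    rw [mul_sum, ← sum_neg_distrib]; exact sum_congr rfl fun i _ => by ring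
  simp only [← sq] at h
  rw [hρ, hlin, lagrangian]
  linarith

theorem dual_bound_le_primal {wbar : Fin p → ℝ} {lam : ℝ} (hlam : 0 < lam)
    {α₁ α₂ : Fin p → ℝ} (hα₁ : ∀ i, 0 ≤ α₁ i) (hα₂ : ∀ i, 0 ≤ α₂ i) (ρ : Fin p → ℝ)
    {x : (Fin p → ℝ) × ℝ} (hx : x ∈ box wbar) :
    -((∑ i, -ρ i * x.1 i) + 0 * x.2 - lagrangian a b wbar α₁ α₂ x) - (∑ i, ρ i ^ 2) / (2 * lam) ≤
      hingeLoss a b x + lam / 2 * ∑ i, x.1 i ^ 2 := by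
  have h₁ : ∑ i, α₁ i * (x.1 i - wbar i) ≤ 0 :=
    sum_nonpos fun i _ => mul_nonpos_of_nonneg_of_nonpos (hα₁ i) (by linarith [(hx.1 i trivial).2])
  have h₂ : ∑ i, α₂ i * (-x.1 i - wbar i) ≤ 0 :=
    sum_nonpos fun i _ => mul_nonpos_of_nonneg_of_nonpos (hα₂ i) (by linarith [(hx.1 i trivial).1])
  have young : ∑ i, ρ i * x.1 i ≤ lam / 2 * ∑ i, x.1 i ^ 2 + (∑ i, ρ i ^ 2) / (2 * lam) := by
    rw [mul_sum, sum_div, ← sum_add_distrib]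
    refine sum_le_sum fun i _ => ?_
    have hsq : lam / 2 * x.1 i ^ 2 + ρ i ^ 2 / (2 * lam) - ρ i * x.1 i =
        (lam * x.1 i - ρ i) ^ 2 / (2 * lam) := by
      field_simp; ring
    linarith [show 0 ≤ (lam * x.1 i - ρ i) ^ 2 / (2 * lam) by positivity]
  simp only [lagrangian, neg_mul, sum_neg_distrib, zero_mul]
  linarith

end SvmDuality

open SvmDuality in
/-- Strong Lagrangian duality for the box-constrained hinge-loss lower-level problem:
`min_{-w̄ ≤ w ≤ w̄} Σⱼ max(1 - bⱼ(wᵀaⱼ - c), 0) + (λ/2)‖w‖₂²` equals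
`max_{ρ, α₁ ≥ 0, α₂ ≥ 0} -l_g*(-ρ, 0) - ‖ρ‖₂²/(2λ)`, where
`l_g(w,c) = Σⱼ max(1 - bⱼ(wᵀaⱼ - c), 0) + α₁ᵀ(w - w̄) + α₂ᵀ(-w - w̄)` and `l_g*` is its
Fenchel conjugate in `(w, c)`. -/
theorem svm_lower_level_strong_duality (p J : ℕ)
    (a : Fin J → Fin p → ℝ) (b : Fin J → ℝ) (hb : ∀ j, b j = 1 ∨ b j = -1)
    (wbar : Fin p → ℝ) (hwbar : ∀ i, 0 < wbar i) (lam : ℝ) (hlam : 0 < lam) :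
    (⨅ w : {w : Fin p → ℝ // ∀ i, -wbar i ≤ w i ∧ w i ≤ wbar i}, ⨅ c : ℝ,
        (((∑ j, max (1 - b j * ((∑ i, (w : Fin p → ℝ) i * a j i) - c)) 0) +
          lam / 2 * ∑ i, ((w : Fin p → ℝ) i) ^ 2 : ℝ) : EReal)) =
      ⨆ ρ : Fin p → ℝ, ⨆ α₁ : {α : Fin p → ℝ // ∀ i, 0 ≤ α i},
        ⨆ α₂ : {α : Fin p → ℝ // ∀ i, 0 ≤ α i},
        (-(⨆ w : Fin p → ℝ, ⨆ c : ℝ,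
            (((∑ i, (-ρ i) * w i) + (0 : ℝ) * c -
              ((∑ j, max (1 - b j * ((∑ i, w i * a j i) - c)) 0) +
                (∑ i, (α₁ : Fin p → ℝ) i * (w i - wbar i)) +
                (∑ i, (α₂ : Fin p → ℝ) i * (-(w i) - wbar i))) : ℝ) : EReal)) -
          (((∑ i, (ρ i) ^ 2) / (2 * lam) : ℝ) : EReal)) := by
  obtain ⟨x₀, hx₀, hmin⟩ := exists_isMinOn_primal hb (fun i => (hwbar i).le) lam
  obtain ⟨α₁, α₂, hα₁, hα₂, hcert⟩ := exists_dual_certificate hwbar hlam.ne' hx₀ hmin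
  apply le_antisymm
  · refine (iInf₂_le ⟨x₀.1, fun i => hx₀.1 i trivial⟩ x₀.2).trans ?_
    refine le_iSup_of_le (fun i => lam * x₀.1 i) (le_iSup_of_le ⟨α₁, hα₁⟩ ?_)
    exact le_iSup_of_le ⟨α₂, hα₂⟩ (EReal.coe_le_neg_iSup₂_sub fun w c => hcert (w, c))
  · refine iSup_le fun ρ => iSup_le fun α₁ => iSup_le fun α₂ =>
      (EReal.neg_iSup₂_sub_le _ _ x₀.1 x₀.2).trans ?_
    refine (EReal.coe_le_coe_iff.2 (dual_bound_le_primal hlam α₁.2 α₂.2 ρ hx₀)).trans ?_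
    refine le_iInf₂ fun w c => EReal.coe_le_coe_iff.2 ?_
    exact isMinOn_iff.1 hmin (w, c) ⟨fun i _ => w.2 i, mem_univ c⟩
end

section
/- Suppose the merit function G(z) = L(x) + δ_X(z) + δ_{{z : g(z) ≤ 0}}(z) + Σⱼ δ_{{z : hⱼ(z) ≤ 0}}(z) satisfies: (a) G(z^{k+1}) ≤ G(z^k) - (β/2)‖z^{k+1} - z^k‖² for all k; (b) dist(0, ∂G(z^k)) ≤ C‖z^{k-1} - z^k‖ for some constant C > 0; (c) G satisfies the Kurdyka–Łojasiewicz property and {z^k} is bounded. Then {z^k} converges to a point z* with 0 ∈ ∂G(z*), and Σ_k ‖z^{k+1} - z^k‖ < ∞. -/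
open scoped BigOperators Classical
open Filter

/-- Indicator function of a set, with values in the extended reals. -/
noncomputable def indE {Z : Type*} (S : Set Z) (z : Z) : EReal :=
  if z ∈ S then 0 else ⊤

/-- Fréchet (regular) subdifferential of an extended-real-valued function. -/
def frechetSubdiffE {Z : Type*} [NormedAddCommGroup Z] [NormedSpace ℝ Z]
    (f : Z → EReal) (x : Z) : Set (Z →L[ℝ] ℝ) :=
  {v | f x ≠ ⊤ ∧ f x ≠ ⊥ ∧
    ∀ ε > (0 : ℝ), ∀ᶠ y in nhds x,
      f x + ((v (y - x) - ε * ‖y - x‖ : ℝ) : EReal) ≤ f y}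

/-- Limiting (Mordukhovich) subdifferential of an extended-real-valued function. -/
def limitingSubdiffE {Z : Type*} [NormedAddCommGroup Z] [NormedSpace ℝ Z]
    (f : Z → EReal) (x : Z) : Set (Z →L[ℝ] ℝ) :=
  {v | ∃ (xs : ℕ → Z) (vs : ℕ → Z →L[ℝ] ℝ),
    Tendsto xs atTop (nhds x) ∧ Tendsto (fun k => f (xs k)) atTop (nhds (f x)) ∧
    Tendsto vs atTop (nhds v) ∧ ∀ k, vs k ∈ frechetSubdiffE f (xs k)}

/-- The Kurdyka–Łojasiewicz property of `f` at a point `x`. -/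
def KLPropertyAt {Z : Type*} [NormedAddCommGroup Z] [NormedSpace ℝ Z]
    (f : Z → EReal) (x : Z) : Prop :=
  ∃ η : ℝ, 0 < η ∧ ∃ U ∈ nhds x, ∃ φ : ℝ → ℝ,
    φ 0 = 0 ∧ ContinuousOn φ (Set.Ico 0 η) ∧ ConcaveOn ℝ (Set.Ico 0 η) φ ∧
    DifferentiableOn ℝ φ (Set.Ioo 0 η) ∧ (∀ s ∈ Set.Ioo (0 : ℝ) η, 0 < deriv φ s) ∧
    ∀ y ∈ U, f x < f y → f y < f x + (η : EReal) →
      ∀ v ∈ limitingSubdiffE f y, 1 ≤ deriv φ ((f y - f x).toReal) * ‖v‖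

/-- The variable space `z = (x, λ, r, ρ)`. -/
abbrev Zsp (n τ : ℕ) : Type :=
  (Fin n → ℝ) × (Fin τ → ℝ) × (Fin τ → ℝ) × (Fin τ → Fin n → ℝ)

/-- The merit function `G(z) = L(x) + δ_X(z) + δ_{g ≤ 0}(z) + Σⱼ δ_{hⱼ ≤ 0}(z)`. -/
noncomputable def Gmerit {n τ : ℕ} (L : (Fin n → ℝ) → ℝ) (X : Set (Zsp n τ))
    (g : Zsp n τ → ℝ) (h : Fin τ → Zsp n τ → ℝ) (z : Zsp n τ) : EReal :=
  ((L z.1 : ℝ) : EReal) + indE X z + indE {z' | g z' ≤ 0} z +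
    ∑ j, indE {z' | h j z' ≤ 0} z

/-!
Sufficient decrease makes the values `G (z k)` nonincreasing; at a cluster point `ξ` of the bounded
sequence they converge to `G ξ`, since `G` is continuous on its closed domain. If they reach `G ξ`
the iterates are eventually constant. Otherwise, near `ξ` the KL inequality, the concavity of the
desingularizing function `φ` and the two descent conditions give
`2 ‖z (k+1) - z k‖ ≤ ‖z k - z (k-1)‖ + c (φ (G (z k) - G ξ) - φ (G (z (k+1)) - G ξ))`.
Summing this bounds the length of the path, which keeps the iterates inside the KL neighbourhood
once they enter it close enough to `ξ`; so the path has finite length and the sequence converges,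
necessarily to `ξ`. The limit is stationary because the graph of the limiting subdifferential is
closed along sequences whose values converge.
-/

open Set Metric

theorem indE_add_indE {Z : Type*} (S T : Set Z) (z : Z) :
    indE S z + indE T z = indE (S ∩ T) z := by
  by_cases hS : z ∈ S <;> by_cases hT : z ∈ T <;> simp [indE, hS, hT]

theorem sum_indE {Z ι : Type*} [Fintype ι] (S : ι → Set Z) (z : Z) :
    ∑ j, indE (S j) z = indE (⋂ j, S j) z := by
  suffices ∀ s : Finset ι, ∑ j ∈ s, indE (S j) z = indE (⋂ j ∈ s, S j) z by
    simpa using this Finset.univ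
  intro s
  induction s using Finset.induction_on with
  | empty => simp [indE]
  | insert j s hj ih => rw [Finset.sum_insert hj, ih, indE_add_indE, Finset.set_biInter_insert]

theorem coe_add_indE {Z : Type*} (a : ℝ) (S : Set Z) (z : Z) :
    (a : EReal) + indE S z = if z ∈ S then (a : EReal) else ⊤ := by
  by_cases hS : z ∈ S <;> simp [indE, hS]

def feasibleSet {n τ : ℕ} (X : Set (Zsp n τ)) (g : Zsp n τ → ℝ) (h : Fin τ → Zsp n τ → ℝ) :
    Set (Zsp n τ) :=
  X ∩ {z | g z ≤ 0} ∩ ⋂ j, {z | h j z ≤ 0}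

theorem Gmerit_eq_ite {n τ : ℕ} (L : (Fin n → ℝ) → ℝ) (X : Set (Zsp n τ))
    (g : Zsp n τ → ℝ) (h : Fin τ → Zsp n τ → ℝ) (z : Zsp n τ) :
    Gmerit L X g h z = if z ∈ feasibleSet X g h then ((L z.1 : ℝ) : EReal) else ⊤ := by
  rw [Gmerit, sum_indE, add_assoc, add_assoc, indE_add_indE, indE_add_indE, coe_add_indE,
    feasibleSet, Set.inter_assoc]

theorem isClosed_feasibleSet {n τ : ℕ} {X : Set (Zsp n τ)} {g : Zsp n τ → ℝ}
    {h : Fin τ → Zsp n τ → ℝ} (hX : IsClosed X) (hg : Continuous g)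
    (hh : ∀ j, Continuous (h j)) : IsClosed (feasibleSet X g h) :=
  (hX.inter (isClosed_le hg continuous_const)).inter
    (isClosed_iInter fun j => isClosed_le (hh j) continuous_const)

section Subdifferential

variable {Z : Type*} [NormedAddCommGroup Z] [NormedSpace ℝ Z]

def frechetGraphE (f : Z → EReal) : Set (Z × EReal × (Z →L[ℝ] ℝ)) :=
  {p | p.2.1 = f p.1 ∧ p.2.2 ∈ frechetSubdiffE f p.1}

theorem mem_limitingSubdiffE_iff_mem_closure {f : Z → EReal} {x : Z} {v : Z →L[ℝ] ℝ} :
    v ∈ limitingSubdiffE f x ↔ (x, f x, v) ∈ closure (frechetGraphE f) := by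
  constructor
  · rintro ⟨xs, vs, hxs, hfs, hvs, hfre⟩
    exact mem_closure_of_tendsto (hxs.prodMk_nhds (hfs.prodMk_nhds hvs))
      (Eventually.of_forall fun k => ⟨rfl, hfre k⟩)
  · intro hmem
    obtain ⟨p, hp, hlim⟩ := mem_closure_iff_seq_limit.mp hmem
    refine ⟨fun k => (p k).1, fun k => (p k).2.2, hlim.fst_nhds, ?_, hlim.snd_nhds.snd_nhds,
      fun k => (hp k).2⟩
    simpa only [(hp _).1] using hlim.snd_nhds.fst_nhds

theorem mem_limitingSubdiffE_of_tendsto {f : Z → EReal} {x : Z} {v : Z →L[ℝ] ℝ}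
    {xs : ℕ → Z} {vs : ℕ → Z →L[ℝ] ℝ} (hxs : Tendsto xs atTop (nhds x))
    (hfs : Tendsto (fun k => f (xs k)) atTop (nhds (f x))) (hvs : Tendsto vs atTop (nhds v))
    (hv : ∀ k, vs k ∈ limitingSubdiffE f (xs k)) : v ∈ limitingSubdiffE f x :=
  mem_limitingSubdiffE_iff_mem_closure.mpr <| isClosed_closure.mem_of_tendsto
    (hxs.prodMk_nhds (hfs.prodMk_nhds hvs))
    (Eventually.of_forall fun k => mem_limitingSubdiffE_iff_mem_closure.mp (hv k))

theorem mem_closure_of_mem_limitingSubdiffE {f : Z → EReal} {x : Z} {v : Z →L[ℝ] ℝ}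
    (hv : v ∈ limitingSubdiffE f x) : x ∈ closure {y | f y ≠ ⊤} := by
  obtain ⟨xs, _, hxs, _, _, hfre⟩ := hv
  exact mem_closure_of_tendsto hxs (Eventually.of_forall fun k => (hfre k).1)

end Subdifferential

theorem two_mul_le_add_of_desingularizing {φ : ℝ → ℝ} {η β C a b s t : ℝ}
    (hconc : ConcaveOn ℝ (Ico 0 η) φ) (hdiff : DifferentiableAt ℝ φ t) (hβ : 0 < β)
    (hb : 0 ≤ b) (hs : 0 ≤ s) (ht : t < η) (hφ' : 0 < deriv φ t)
    (hdec : s + β / 2 * a ^ 2 ≤ t) (hKL : 1 ≤ deriv φ t * (C * b)) :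
    2 * a ≤ b + 2 * C / β * (φ t - φ s) := by
  have hst : s ≤ t := by nlinarith
  have htan : deriv φ t * (t - s) ≤ φ t - φ s := by
    rcases hst.eq_or_lt with rfl | hlt
    · simp
    · have := hconc.deriv_le_slope ⟨hs, hlt.trans ht⟩ ⟨hs.trans hst, ht⟩ hlt hdiff
      rwa [slope_def_field, le_div_iff₀ (sub_pos.mpr hlt)] at this
  have hCb : 0 < C * b := pos_of_mul_pos_right (one_pos.trans_le hKL) hφ'.le
  set e := 2 * C / β * (φ t - φ s)
  have hsq : a ^ 2 ≤ b * e := calc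
    a ^ 2 = 2 / β * (β / 2 * a ^ 2) := by field_simp
    _ ≤ 2 / β * (t - s) := by gcongr; linarith
    _ ≤ 2 / β * (deriv φ t * (C * b) * (t - s)) := by
      gcongr; exact le_mul_of_one_le_left (sub_nonneg.mpr hst) hKL
    _ ≤ 2 / β * (C * b * (φ t - φ s)) := by
      rw [mul_comm (deriv φ t), mul_assoc]; gcongr
    _ = b * e := by ring
  have hb' : 0 < b := hb.lt_of_ne (by rintro rfl; simp at hCb)
  have he : 0 ≤ e := nonneg_of_mul_nonneg_right ((sq_nonneg a).trans hsq) hb'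
  nlinarith [sq_nonneg (b - e), sq_nonneg (2 * a - b - e)]

theorem summable_dist_of_two_mul_dist_le {E : Type*} [PseudoMetricSpace E] {x : ℕ → E}
    {Φ : ℕ → ℝ} {c : E} {r : ℝ} (hΦ : ∀ k, 0 ≤ Φ k)
    (hr : dist (x 0) c + 2 * dist (x 0) (x 1) + Φ 0 ≤ r)
    (hstep : ∀ k, x (k + 1) ∈ closedBall c r →
      2 * dist (x (k + 1)) (x (k + 2)) ≤ dist (x k) (x (k + 1)) + (Φ k - Φ (k + 1))) :
    Summable fun k => dist (x k) (x (k + 1)) := by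
  set D := fun k => dist (x k) (x (k + 1))
  have key : ∀ m, ∑ i ∈ Finset.range (m + 1), D i + D m + Φ m ≤ 2 * D 0 + Φ 0 := by
    intro m
    induction m with
    | zero =>
      simp only [zero_add, Finset.sum_range_one]
      linarith
    | succ m ih =>
      have hball : x (m + 1) ∈ closedBall c r := by
        rw [mem_closedBall, dist_comm]
        calc dist c (x (m + 1)) ≤ dist c (x 0) + dist (x 0) (x (m + 1)) := dist_triangle _ _ _
          _ ≤ dist (x 0) c + ∑ i ∈ Finset.range (m + 1), D i := by
            rw [dist_comm c]; gcongr; exact dist_le_range_sum_dist x _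
          _ ≤ r := by linarith [hΦ m, dist_nonneg (x := x m) (y := x (m + 1))]
      rw [Finset.sum_range_succ]
      linarith [hstep m hball]
  refine summable_of_sum_range_le (c := 2 * D 0 + Φ 0) (fun _ => dist_nonneg) fun m => ?_
  cases m with
  | zero =>
    simp only [Finset.sum_range_zero]
    linarith [hΦ 0, dist_nonneg (x := x 0) (y := x 1)]
  | succ m => linarith [key m, hΦ m, dist_nonneg (x := x m) (y := x (m + 1))]

theorem nonneg_of_deriv_pos {φ : ℝ → ℝ} {η t : ℝ} (hφ0 : φ 0 = 0)
    (hφc : ContinuousOn φ (Ico 0 η)) (hφ' : ∀ s ∈ Ioo 0 η, 0 < deriv φ s) (ht : t ∈ Ico 0 η) :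
    0 ≤ φ t := by
  have hmono := (strictMonoOn_of_deriv_pos (convex_Ico 0 η) hφc (by rwa [interior_Ico])).monotoneOn
  simpa [hφ0] using hmono ⟨le_rfl, ht.1.trans_lt ht.2⟩ ht ht.1

section Descent

variable {E : Type*} [NormedAddCommGroup E] [NormedSpace ℝ E]

/-- Conditions (H1) and (H2) of Attouch–Bolte–Svaiter; `F` is a real-valued function that agrees
with `f` along the iterates, so that the descent estimates can be written in `ℝ`. -/
structure IsDescentSequence (f : E → EReal) (F : E → ℝ) (β C : ℝ) (w : ℕ → E) : Prop where
  apply_eq : ∀ k, f (w k) = F (w k)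
  sufficient_decrease : ∀ k, F (w (k + 1)) + β / 2 * dist (w k) (w (k + 1)) ^ 2 ≤ F (w k)
  relative_error : ∀ k, ∃ v ∈ limitingSubdiffE f (w (k + 1)), ‖v‖ ≤ C * dist (w k) (w (k + 1))

namespace IsDescentSequence

variable {f : E → EReal} {F : E → ℝ} {β C : ℝ} {w : ℕ → E}

theorem antitone (hw : IsDescentSequence f F β C w) (hβ : 0 ≤ β) :
    Antitone fun k => F (w k) :=
  antitone_nat_of_succ_le fun k => by
    have := hw.sufficient_decrease k
    nlinarith [sq_nonneg (dist (w k) (w (k + 1)))]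

theorem tendsto_dist_zero (hw : IsDescentSequence f F β C w) (hβ : 0 < β) {a : ℝ}
    (hlim : Tendsto (fun k => F (w k)) atTop (nhds a)) :
    Tendsto (fun k => dist (w k) (w (k + 1))) atTop (nhds 0) := by
  have hgap : Tendsto (fun k => 2 / β * (F (w k) - F (w (k + 1)))) atTop (nhds 0) := by
    simpa using (hlim.sub ((tendsto_add_atTop_iff_nat 1).mpr hlim)).const_mul (2 / β)
  have hsq : Tendsto (fun k => dist (w k) (w (k + 1)) ^ 2) atTop (nhds 0) := by
    refine squeeze_zero (fun k => sq_nonneg _) (fun k => ?_) hgap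
    rw [div_mul_eq_mul_div, le_div_iff₀ hβ]
    nlinarith [hw.sufficient_decrease k]
  simpa [Real.sqrt_sq dist_nonneg] using hsq.sqrt

theorem summable_dist_of_apply_eq_of_forall_le (hw : IsDescentSequence f F β C w) (hβ : 0 < β)
    {a : ℝ} (hle : ∀ k, a ≤ F (w k)) {k₀ : ℕ} (hk₀ : F (w k₀) = a) :
    Summable fun k => dist (w k) (w (k + 1)) := by
  have hconst : ∀ k, k₀ ≤ k → F (w k) = a := fun k hk =>
    le_antisymm ((hw.antitone hβ.le hk).trans hk₀.le) (hle k)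
  refine (summable_nat_add_iff k₀).mp (summable_zero.congr fun k => ?_)
  have := hw.sufficient_decrease (k + k₀)
  rw [hconst _ (by omega), hconst _ (by omega)] at this
  have : dist (w (k + k₀)) (w (k + k₀ + 1)) ^ 2 ≤ 0 := by nlinarith
  exact (pow_eq_zero_iff two_ne_zero).mp (le_antisymm this (sq_nonneg _)) |>.symm

theorem two_mul_dist_le_of_KL (hw : IsDescentSequence f F β C w) (hβ : 0 < β) {ξ : E}
    (hfξ : f ξ = F ξ) (hlow : ∀ k, F ξ < F (w k)) {η : ℝ} {U : Set E} {φ : ℝ → ℝ}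
    (hconc : ConcaveOn ℝ (Ico 0 η) φ) (hdiff : DifferentiableOn ℝ φ (Ioo 0 η))
    (hφ' : ∀ s ∈ Ioo 0 η, 0 < deriv φ s)
    (hineq : ∀ y ∈ U, f ξ < f y → f y < f ξ + (η : EReal) →
      ∀ v ∈ limitingSubdiffE f y, 1 ≤ deriv φ ((f y - f ξ).toReal) * ‖v‖)
    {k : ℕ} (hkη : F (w (k + 1)) - F ξ < η) (hkU : w (k + 1) ∈ U) :
    2 * dist (w (k + 1)) (w (k + 2)) ≤ dist (w k) (w (k + 1)) +
      2 * C / β * (φ (F (w (k + 1)) - F ξ) - φ (F (w (k + 2)) - F ξ)) := by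
  have ht : F (w (k + 1)) - F ξ ∈ Ioo 0 η := ⟨sub_pos.mpr (hlow _), hkη⟩
  obtain ⟨v, hv, hvC⟩ := hw.relative_error k
  have hKL := hineq _ hkU (by rw [hfξ, hw.apply_eq]; exact_mod_cast hlow _)
    (by rw [hfξ, hw.apply_eq]; exact_mod_cast (by linarith : F (w (k + 1)) < F ξ + η)) v hv
  rw [hw.apply_eq, hfξ, ← EReal.coe_sub, EReal.toReal_coe] at hKL
  refine two_mul_le_add_of_desingularizing hconc (hdiff.differentiableAt (Ioo_mem_nhds ht.1 ht.2))
    hβ dist_nonneg (sub_nonneg.mpr (hlow _).le) ht.2 (hφ' _ ht) ?_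
    (hKL.trans (by gcongr; exact (hφ' _ ht).le))
  linarith [hw.sufficient_decrease (k + 1)]

theorem summable_dist_of_KLPropertyAt (hw : IsDescentSequence f F β C w) (hβ : 0 < β)
    (hC : 0 ≤ C) {ξ : E} (hKL : KLPropertyAt f ξ) (hfξ : f ξ = F ξ)
    (hξ : MapClusterPt ξ atTop w) (hlim : Tendsto (fun k => F (w k)) atTop (nhds (F ξ)))
    (hlow : ∀ k, F ξ < F (w k)) :
    Summable fun k => dist (w k) (w (k + 1)) := by
  obtain ⟨η, hη, U, hU, φ, hφ0, hφc, hconc, hdiff, hφ', hineq⟩ := hKL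
  obtain ⟨r, hr, hrU⟩ := nhds_basis_closedBall.mem_iff.mp hU
  have hgap : Tendsto (fun k => F (w k) - F ξ) atTop (nhds 0) := by
    simpa using hlim.sub_const (F ξ)
  have hφgap : Tendsto (fun k => φ (F (w (k + 1)) - F ξ)) atTop (nhds 0) := by
    have := (hφc 0 ⟨le_rfl, hη⟩).tendsto.comp (tendsto_nhdsWithin_iff.mpr
      ⟨hgap, (hgap.eventually_lt_const hη).mono fun k hk => ⟨(sub_pos.mpr (hlow k)).le, hk⟩⟩)
    rw [hφ0] at this
    exact this.comp (tendsto_add_atTop_nat 1)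
  have hsmall : ∀ᶠ k in atTop, F (w k) - F ξ < η ∧
      2 * dist (w k) (w (k + 1)) + 2 * C / β * φ (F (w (k + 1)) - F ξ) < r / 2 := by
    refine (hgap.eventually_lt_const hη).and (Tendsto.eventually_lt_const (half_pos hr) ?_)
    simpa using ((hw.tendsto_dist_zero hβ hlim).const_mul 2).add (hφgap.const_mul (2 * C / β))
  -- Start the tail so close to `ξ`, and with so small a KL budget, that the path-length bound
  -- keeps all later iterates in `closedBall ξ r ⊆ U`.
  obtain ⟨k₀, hk₀near, hk₀η, hk₀small⟩ :=
    ((hξ.frequently (ball_mem_nhds ξ (half_pos hr))).and_eventually hsmall).exists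
  have hk₀η' : ∀ j, F (w (j + k₀ + 1)) - F ξ < η := fun j =>
    lt_of_le_of_lt (by linarith [hw.antitone hβ.le (by omega : k₀ ≤ j + k₀ + 1)]) hk₀η
  have hsum : Summable fun j => dist (w (j + k₀)) (w (j + 1 + k₀)) := by
    refine summable_dist_of_two_mul_dist_le (c := ξ) (r := r)
      (Φ := fun j => 2 * C / β * φ (F (w (j + k₀ + 1)) - F ξ))
      (fun j => mul_nonneg (by positivity)
        (nonneg_of_deriv_pos hφ0 hφc hφ' ⟨(sub_pos.mpr (hlow _)).le, hk₀η' j⟩)) ?_ fun j hj => ?_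
    · simp only [zero_add, add_comm 1 k₀]
      linarith [mem_ball.mp hk₀near]
    · rw [add_right_comm j 1 k₀] at hj ⊢
      rw [show j + 2 + k₀ = j + k₀ + 2 by omega, ← mul_sub]
      exact hw.two_mul_dist_le_of_KL hβ hfξ hlow hconc hdiff hφ' hineq (hk₀η' j) (hrU hj)
  exact (summable_nat_add_iff k₀).mp (by simpa only [add_right_comm _ 1 k₀] using hsum)

theorem zero_mem_limitingSubdiffE (hw : IsDescentSequence f F β C w) (hβ : 0 < β) {ξ : E}
    (hfξ : f ξ = F ξ) (hwξ : Tendsto w atTop (nhds ξ))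
    (hlim : Tendsto (fun k => F (w k)) atTop (nhds (F ξ))) :
    0 ∈ limitingSubdiffE f ξ := by
  choose v hv hvC using hw.relative_error
  refine mem_limitingSubdiffE_of_tendsto (hwξ.comp (tendsto_add_atTop_nat 1)) ?_
    (squeeze_zero_norm hvC ?_) hv
  · simpa only [Function.comp_def, hw.apply_eq, hfξ] using
      EReal.tendsto_coe.mpr (hlim.comp (tendsto_add_atTop_nat 1))
  · simpa using (hw.tendsto_dist_zero hβ hlim).const_mul C

theorem exists_tendsto_zero_mem_limitingSubdiffE [ProperSpace E]
    (hw : IsDescentSequence f F β C w) (hβ : 0 < β) (hC : 0 ≤ C) {S : Set E} (hS : IsClosed S)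
    (hF : ContinuousOn F S) (hfS : ∀ x ∈ S, f x = F x) (hwS : ∀ k, w k ∈ S)
    (hKL : ∀ x ∈ S, KLPropertyAt f x) (hbdd : Bornology.IsBounded (range w)) :
    ∃ ξ, Tendsto w atTop (nhds ξ) ∧ 0 ∈ limitingSubdiffE f ξ ∧
      Summable fun k => dist (w k) (w (k + 1)) := by
  obtain ⟨ξ, -, ψ, hψ, hwψ⟩ := tendsto_subseq_of_bounded hbdd (mem_range_self (f := w))
  have hξS : ξ ∈ S := hS.mem_of_tendsto hwψ (Eventually.of_forall fun k => hwS _)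
  have hlim : Tendsto (fun k => F (w k)) atTop (nhds (F ξ)) :=
    (tendsto_iff_tendsto_subseq_of_antitone (hw.antitone hβ.le) hψ.tendsto_atTop).mpr
      ((hF ξ hξS).tendsto.comp (tendsto_nhdsWithin_iff.mpr ⟨hwψ, .of_forall fun k => hwS _⟩))
  have hle : ∀ k, F ξ ≤ F (w k) := (hw.antitone hβ.le).le_of_tendsto hlim
  have hsum : Summable fun k => dist (w k) (w (k + 1)) := by
    by_cases hstop : ∃ k, F (w k) = F ξ
    · obtain ⟨k₀, hk₀⟩ := hstop
      exact hw.summable_dist_of_apply_eq_of_forall_le hβ hle hk₀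
    · push Not at hstop
      exact hw.summable_dist_of_KLPropertyAt hβ hC (hKL ξ hξS) (hfS ξ hξS)
        (hwψ.mapClusterPt.of_comp hψ.tendsto_atTop) hlim fun k => (hle k).lt_of_ne (hstop k).symm
  obtain ⟨ξ', hwξ'⟩ := cauchySeq_tendsto_of_complete (cauchySeq_of_summable_dist hsum)
  obtain rfl : ξ' = ξ := tendsto_nhds_unique (hwξ'.comp hψ.tendsto_atTop) hwψ
  exact ⟨ξ', hwξ', hw.zero_mem_limitingSubdiffE hβ (hfS _ hξS) hwξ' hlim, hsum⟩

end IsDescentSequence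

end Descent

/-- Abstract KL convergence framework (Attouch–Bolte–Svaiter): sufficient decrease,
relative error, the KL property, and boundedness of the iterates imply that the whole
sequence has finite length and converges to a stationary point of the merit function. -/
theorem kl_convergence_of_descent (n τ : ℕ)
    (L : (Fin n → ℝ) → ℝ) (hLcont : Continuous L)
    (X : Set (Zsp n τ)) (hX : IsClosed X)
    (g : Zsp n τ → ℝ) (hg : Continuous g)
    (h : Fin τ → Zsp n τ → ℝ) (hh : ∀ j, Continuous (h j))
    (β : ℝ) (hβ : 0 < β) (C : ℝ) (hC : 0 < C)
    (z : ℕ → Zsp n τ)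
    (hdec : ∀ k, Gmerit L X g h (z (k + 1)) +
      ((β / 2 * ‖z (k + 1) - z k‖ ^ 2 : ℝ) : EReal) ≤ Gmerit L X g h (z k))
    (herr : ∀ k, ∃ v ∈ limitingSubdiffE (Gmerit L X g h) (z (k + 1)),
      ‖v‖ ≤ C * ‖z k - z (k + 1)‖)
    (hKL : ∀ x : Zsp n τ, Gmerit L X g h x ≠ ⊤ → KLPropertyAt (Gmerit L X g h) x)
    (hbdd : ∃ M : ℝ, ∀ k, ‖z k‖ ≤ M) :
    ∃ zstar : Zsp n τ, Tendsto z atTop (nhds zstar) ∧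
      (0 : Zsp n τ →L[ℝ] ℝ) ∈ limitingSubdiffE (Gmerit L X g h) zstar ∧
      Summable (fun k => ‖z (k + 1) - z k‖) := by
  have hS := isClosed_feasibleSet hX hg hh
  have hGS : ∀ x ∈ feasibleSet X g h, Gmerit L X g h x = L x.1 := fun x hx => by
    rw [Gmerit_eq_ite, if_pos hx]
  -- `z 0` may lie outside the domain of `Gmerit`; every later iterate carries a subgradient,
  -- so it lies in the closure of the domain, which is closed.
  have hzS : ∀ k, z (k + 1) ∈ feasibleSet X g h := fun k => by
    obtain ⟨v, hv, -⟩ := herr k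
    refine closure_minimal (fun y hy => ?_) hS (mem_closure_of_mem_limitingSubdiffE hv)
    by_contra hyS
    exact hy (by rw [Gmerit_eq_ite, if_neg hyS])
  have hw : IsDescentSequence (Gmerit L X g h) (fun x => L x.1) β C (fun k => z (k + 1)) := by
    refine ⟨fun k => hGS _ (hzS k), fun k => ?_, fun k => ?_⟩
    · have := hdec (k + 1)
      rwa [hGS _ (hzS k), hGS _ (hzS (k + 1)), ← EReal.coe_add, EReal.coe_le_coe_iff,
        ← dist_eq_norm, dist_comm] at this
    · simpa only [dist_eq_norm] using herr (k + 1)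
  obtain ⟨M, hM⟩ := hbdd
  obtain ⟨zstar, hlim, hzero, hsum⟩ := hw.exists_tendsto_zero_mem_limitingSubdiffE hβ hC.le hS
    (hLcont.comp continuous_fst).continuousOn hGS hzS
    (fun x hx => hKL x (by rw [hGS x hx]; exact EReal.coe_ne_top _))
    (isBounded_iff_forall_norm_le.mpr ⟨M, by rintro _ ⟨k, rfl⟩; exact hM _⟩)
  refine ⟨zstar, (tendsto_add_atTop_iff_nat 1).mp hlim, hzero, (summable_nat_add_iff 1).mp ?_⟩
  simpa only [dist_eq_norm'] using hsum
end
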